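/- arXiv:2010.13249 — 2 statements merged into one kernel-verified Lean document; each statement's English description precedes it below -/
import Mathlib

section
/- For k ≥ 2, n ≥ 1 and q ≥ 1, the hat-guessing game on the windmill graph W_{k,n} with q colors has a winning strategy if and only if there exist q pairwise disjoint subsets P_1, …, P_q of ((Fin (k−1) → Fin q))^n, where each P_m is of the form ∏_{j=1}^{n} (complement of S_{m,j}) for sets S_{m,j} ⊆ (Fin (k−1) → Fin q) that are each a solvable set of K_{k−1} with q colors. -/
/-- A winning strategy for the hat-guessing game on `G` with `q` colors. -/
def HatGuessingWins {V : Type*} (G : SimpleGraph V) (q : ℕ) : Prop :=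
  ∃ f : ∀ v : V, (G.neighborSet v → Fin q) → Fin q,
    ∀ c : V → Fin q, ∃ v : V, f v (fun u => c u.1) = c v

/-- The windmill graph `W_{k,n}`: `n` copies of `K_k` glued at a single vertex (the axle,
represented by `none`); vertex `some (i, a)` is vertex `a` of the `i`-th blade. -/
def windmillGraph (k n : ℕ) : SimpleGraph (Option (Fin n × Fin (k - 1))) where
  Adj x y := x ≠ y ∧ ∀ a b, x = some a → y = some b → a.1 = b.1
  symm := ⟨fun _ _ h => ⟨h.1.symm, fun a b ha hb => (h.2 b a hb ha).symm⟩⟩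
  loopless := ⟨fun _ h => h.1 rfl⟩

/-- `S` is a solvable set of hat assignments for the hat-guessing game on `K_m` with
`q` colors: there are guessing functions, one for each vertex, each depending only on the
other vertices' colors, such that on every assignment in `S` some vertex guesses right. -/
def SolvableSet (m q : ℕ) (S : Finset (Fin m → Fin q)) : Prop :=
  ∃ f : ∀ i : Fin m, ({j : Fin m // j ≠ i} → Fin q) → Fin q,
    ∀ x ∈ S, ∃ i : Fin m, f i (fun j => x j.1) = x i

section windmillHelpers

variable {k n q : ℕ}

lemma wm_adj_some_none (p : Fin n × Fin (k - 1)) :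
    (windmillGraph k n).Adj (some p) none :=
  ⟨Option.some_ne_none p, fun _ b _ hb => nomatch hb⟩

lemma wm_adj_none_some (p : Fin n × Fin (k - 1)) :
    (windmillGraph k n).Adj none (some p) :=
  (wm_adj_some_none p).symm

lemma wm_adj_some_some {j : Fin n} {a b : Fin (k - 1)} (h : a ≠ b) :
    (windmillGraph k n).Adj (some (j, a)) (some (j, b)) := by
  refine ⟨by simp [h], fun p1 p2 h1 h2 => ?_⟩
  injection h1 with h1; injection h2 with h2; subst h1; subst h2; rfl

end windmillHelpers

/-- The hat-guessing game on the windmill `W_{k,n}` with `q` colors has a winning strategy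
iff there are `q` pairwise disjoint subsets of `(Fin (k-1) → Fin q)^n`, each a product of
complements of solvable sets of `K_{k-1}`. -/
theorem windmill_condition (k n q : ℕ) (hk : 2 ≤ k) (hn : 1 ≤ n) (hq : 1 ≤ q) :
    HatGuessingWins (windmillGraph k n) q ↔
      ∃ S : Fin q → Fin n → Finset (Fin (k - 1) → Fin q),
        (∀ m j, SolvableSet (k - 1) q (S m j)) ∧
        ∀ m m' : Fin q, m ≠ m' →
          ∀ x : Fin n → (Fin (k - 1) → Fin q),
            (∀ j, x j ∉ S m j) → ¬(∀ j, x j ∉ S m' j) := by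
  classical
  constructor
  · rintro ⟨f, hf⟩
    refine ⟨fun m j => Finset.univ.filter
        (fun x => ∃ a, f (some (j, a)) (fun u => u.1.elim m (fun p => x p.2)) = x a),
      ?_, ?_⟩
    · intro m j
      refine ⟨fun i others => f (some (j, i))
          (fun u => u.1.elim m (fun p => if h : p.2 = i then ⟨0, hq⟩ else others ⟨p.2, h⟩)), ?_⟩
      intro x hx
      simp only [Finset.mem_filter, Finset.mem_univ, true_and] at hx
      obtain ⟨a, ha⟩ := hx
      refine ⟨a, ?_⟩
      have key : (fun u : (windmillGraph k n).neighborSet (some (j, a)) =>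
          u.1.elim m (fun p => if h : p.2 = a then (⟨0, hq⟩ : Fin q)
            else (fun j' : {j' : Fin (k - 1) // j' ≠ a} => x j'.1) ⟨p.2, h⟩))
          = (fun u => u.1.elim m (fun p => x p.2)) := by
        funext u
        obtain ⟨u, hu⟩ := u
        cases u with
        | none => rfl
        | some p =>
          obtain ⟨p1, p2⟩ := p
          have h1 : j = p1 := hu.2 (j, a) (p1, p2) rfl rfl
          have h2 : p2 ≠ a := by
            intro h2; subst h2; subst h1; exact hu.1 rfl
          simp [h2]
      exact (congrArg (f (some (j, a))) key).trans ha
    · intro m m' hne x hm hm'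
      have main : ∀ m0 : Fin q,
          m0 ≠ f none (fun u => u.1.elim ⟨0, hq⟩ (fun p => x p.1 p.2)) →
          ¬ (∀ j, x j ∉ Finset.univ.filter
            (fun y => ∃ a, f (some (j, a)) (fun u => u.1.elim m0 (fun p => y p.2)) = y a)) := by
        intro m0 hm0 hall
        obtain ⟨v, hv⟩ := hf (fun v => v.elim m0 (fun p => x p.1 p.2))
        cases v with
        | none =>
          apply hm0
          have : (fun u : (windmillGraph k n).neighborSet none =>
              (fun v : Option (Fin n × Fin (k - 1)) => v.elim m0 (fun p => x p.1 p.2)) u.1)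
              = (fun u => u.1.elim ⟨0, hq⟩ (fun p => x p.1 p.2)) := by
            funext u
            obtain ⟨u, hu⟩ := u
            cases u with
            | none => exact absurd rfl hu.1
            | some p => rfl
          rw [this] at hv
          exact hv.symm
        | some p =>
          obtain ⟨j, a⟩ := p
          have heq : (fun u : (windmillGraph k n).neighborSet (some (j, a)) =>
              (fun v : Option (Fin n × Fin (k - 1)) => v.elim m0 (fun p => x p.1 p.2)) u.1)
              = (fun u => u.1.elim m0 (fun p => x j p.2)) := by
            funext u
            obtain ⟨u, hu⟩ := u
            cases u with
            | none => rfl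
            | some p' =>
              have h1 : j = p'.1 := hu.2 (j, a) p' rfl rfl
              simp only [Option.elim]
              rw [← h1]
          rw [heq] at hv
          exact hall j (Finset.mem_filter.mpr ⟨Finset.mem_univ _, ⟨a, hv⟩⟩)
      by_cases hG : m = f none (fun u => u.1.elim ⟨0, hq⟩ (fun p => x p.1 p.2))
      · exact main m' (fun h => hne (hG.trans h.symm)) hm'
      · exact main m hG hm
  · rintro ⟨S, hsolv, hdisj⟩
    choose g hg using hsolv
    refine ⟨fun v => match v with
      | none => fun y =>
          if h : ∃ m0 : Fin q, ∀ j, (fun a => y ⟨some (j, a), wm_adj_none_some _⟩) ∉ S m0 j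
          then h.choose else ⟨0, hq⟩
      | some p => fun y =>
          g (y ⟨none, wm_adj_some_none p⟩) p.1 p.2
            (fun b => y ⟨some (p.1, b.1), wm_adj_some_some (Ne.symm b.2)⟩), ?_⟩
    intro c
    by_cases h : ∀ j, (fun a => c (some (j, a))) ∉ S (c none) j
    · refine ⟨none, ?_⟩
      show (if h' : ∃ m0 : Fin q, ∀ j, (fun a => c (some (j, a))) ∉ S m0 j
          then h'.choose else ⟨0, hq⟩) = c none
      have h' : ∃ m0 : Fin q, ∀ j, (fun a => c (some (j, a))) ∉ S m0 j := ⟨c none, h⟩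
      rw [dif_pos h']
      by_contra hc
      exact hdisj h'.choose (c none) hc (fun j a => c (some (j, a))) h'.choose_spec h
    · push_neg at h
      obtain ⟨j, hj⟩ := h
      obtain ⟨i, hi⟩ := hg (c none) j _ hj
      exact ⟨some (j, i), hi⟩
end

section
/- For all k ≥ 2, there exists a set C ⊆ (Fin (k−1) → Fin (2k−2)) such that both C and its complement are solvable sets of the complete graph K_{k−1} with 2k−2 colors. -/
/-- For all `k ≥ 2`, there is a set `C` of hat assignments such that both `C` and its
complement are solvable sets of `K_{k-1}` with `2k - 2` colors. -/
theorem solvable_set_and_complement (k : ℕ) (hk : 2 ≤ k) :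
    ∃ C : Finset (Fin (k - 1) → Fin (2 * k - 2)),
      SolvableSet (k - 1) (2 * k - 2) C ∧ SolvableSet (k - 1) (2 * k - 2) Cᶜ := by
  set m := k - 1 with hm
  set q := 2 * k - 2 with hq
  have hq2 : q = 2 * m := by omega
  have hm1 : 1 ≤ m := by omega
  haveI : NeZero q := ⟨by omega⟩
  have hsum : ∀ (x : Fin m → Fin q) (i : Fin m),
      (∑ j : {j : Fin m // j ≠ i}, x j.1) = (∑ j, x j) - x i := by
    intro x i
    have h1 : (∑ j, x j) = x i + ∑ j ∈ {i}ᶜ, x j :=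
      (Fintype.sum_eq_add_sum_compl i x)
    have h2 : (∑ j ∈ ({i}ᶜ : Finset (Fin m)), x j)
        = ∑ j : {j : Fin m // j ≠ i}, x j.1 := by
      rw [← Finset.sum_subtype ({i}ᶜ : Finset (Fin m))
        (fun j => by simp) x]
    rw [← h2, h1]
    abel
  refine ⟨Finset.univ.filter (fun x => (∑ j, x j).val < m), ?_, ?_⟩
  · refine ⟨fun i v => Fin.castLE (by omega) i - ∑ j, v j, ?_⟩
    intro x hx
    rw [Finset.mem_filter] at hx
    refine ⟨⟨(∑ j, x j).val, hx.2⟩, ?_⟩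
    have ht : (Fin.castLE (by omega) (⟨(∑ j, x j).val, hx.2⟩ : Fin m) : Fin q)
        = ∑ j, x j := Fin.ext rfl
    simp only [hsum, ht]
    exact sub_sub_cancel _ _
  · refine ⟨fun i v => (⟨i.val + m, by omega⟩ : Fin q) - ∑ j, v j, ?_⟩
    intro x hx
    rw [Finset.mem_compl, Finset.mem_filter] at hx
    have hge : m ≤ (∑ j, x j).val := by
      by_contra h
      exact hx ⟨Finset.mem_univ _, by omega⟩
    have hlt : (∑ j, x j).val - m < m := by
      have := (∑ j, x j).isLt; omega
    refine ⟨⟨(∑ j, x j).val - m, hlt⟩, ?_⟩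
    have ht : (⟨(∑ j, x j).val - m + m, by omega⟩ : Fin q) = ∑ j, x j :=
      Fin.ext (by simp; omega)
    simp only [hsum, ht]
    exact sub_sub_cancel _ _
end
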